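/- arXiv:1805.01338 — 4 statements merged into one kernel-verified Lean document; each statement's English description precedes it below -/
import Mathlib

section
/- If X(β) is a random point in ℝ^d with density f_{d,β}, then √(2β)·X(β) converges in distribution to the standard normal distribution on ℝ^d as β → +∞. -/
/-!
Substituting `x = y / √(2β)`, the law of `√(2β) X(β)` has density
`c_{d,β} (2β)^{-d/2} (1 - (‖y‖²/2)/β)₊^β`. The profile `(1 - u/β)₊^β` is dominated by `e^{-u}`
and tends to it, while `c_{d,β} (2β)^{-d/2} → (2π)^{-d/2}` because `Γ(x + a) ~ Γ(x) x^a`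
(Wendel's inequalities, from the log-convexity of `Γ`). Dominated convergence concludes.
-/

open MeasureTheory Real Filter Topology

lemma tendsto_add_div_self_atTop (c : ℝ) : Tendsto (fun x : ℝ => (x + c) / x) atTop (𝓝 1) := by
  have h : Tendsto (fun x : ℝ => 1 + c / x) atTop (𝓝 (1 + 0)) :=
    tendsto_const_nhds.add (tendsto_const_nhds.div_atTop tendsto_id)
  rw [add_zero] at h
  refine h.congr' ?_
  filter_upwards [eventually_ne_atTop 0] with x hx
  rw [add_div, div_self hx]

namespace Real

lemma Gamma_add_le_Gamma_mul_rpow {a x : ℝ} (ha₀ : 0 < a) (ha₁ : a < 1) (hx : 0 < x) :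
    Gamma (x + a) ≤ Gamma x * x ^ a := by
  have hΓ := Gamma_pos_of_pos hx
  calc Gamma (x + a) = Gamma ((1 - a) * x + a * (x + 1)) := by ring_nf
    _ ≤ Gamma x ^ (1 - a) * Gamma (x + 1) ^ a :=
      Gamma_mul_add_mul_le_rpow_Gamma_mul_rpow_Gamma hx (by linarith) (sub_pos.2 ha₁) ha₀
        (sub_add_cancel 1 a)
    _ = Gamma x * x ^ a := by
      rw [Gamma_add_one hx.ne', mul_rpow hx.le hΓ.le, mul_comm (x ^ a), ← mul_assoc,
        ← rpow_add hΓ, sub_add_cancel, rpow_one]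

lemma Gamma_mul_le_Gamma_add_mul_rpow {a x : ℝ} (ha₀ : 0 < a) (ha₁ : a < 1) (hx : 0 < x) :
    Gamma x * x ≤ Gamma (x + a) * (x + a) ^ (1 - a) := by
  have hxa : 0 < x + a := by linarith
  have hΓ := Gamma_pos_of_pos hxa
  calc Gamma x * x = Gamma (a * (x + a) + (1 - a) * (x + a + 1)) := by
        rw [mul_comm, ← Gamma_add_one hx.ne']; ring_nf
    _ ≤ Gamma (x + a) ^ a * Gamma (x + a + 1) ^ (1 - a) :=
      Gamma_mul_add_mul_le_rpow_Gamma_mul_rpow_Gamma hxa (by linarith) ha₀ (sub_pos.2 ha₁)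
        (add_sub_cancel a 1)
    _ = Gamma (x + a) * (x + a) ^ (1 - a) := by
      rw [Gamma_add_one hxa.ne', mul_rpow hxa.le hΓ.le, mul_comm ((x + a) ^ (1 - a)),
        ← mul_assoc, ← rpow_add hΓ, add_sub_cancel, rpow_one]

lemma tendsto_Gamma_add_div_Gamma_mul_rpow_of_lt_one {a : ℝ} (ha₀ : 0 ≤ a) (ha₁ : a < 1) :
    Tendsto (fun x => Gamma (x + a) / (Gamma x * x ^ a)) atTop (𝓝 1) := by
  rcases ha₀.eq_or_lt with rfl | ha₀
  · refine tendsto_const_nhds.congr' ?_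
    filter_upwards [eventually_gt_atTop 0] with x hx
    simp [(Gamma_pos_of_pos hx).ne']
  have hlower : Tendsto (fun x : ℝ => (x / (x + a)) ^ (1 - a)) atTop (𝓝 1) := by
    have h := ((tendsto_add_div_self_atTop a).inv₀ one_ne_zero).rpow_const
      (p := 1 - a) (Or.inl (by norm_num))
    simpa using h
  refine tendsto_of_tendsto_of_tendsto_of_le_of_le' hlower tendsto_const_nhds ?_ ?_ <;>
    filter_upwards [eventually_gt_atTop 0] with x hx <;>
    have hden : 0 < Gamma x * x ^ a := mul_pos (Gamma_pos_of_pos hx) (rpow_pos_of_pos hx a)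
  · have hxa : 0 < x + a := by linarith
    rw [le_div_iff₀ hden, div_rpow hx.le hxa.le, div_mul_eq_mul_div,
      div_le_iff₀ (rpow_pos_of_pos hxa _)]
    calc x ^ (1 - a) * (Gamma x * x ^ a) = Gamma x * x := by
          rw [mul_left_comm, ← rpow_add hx, sub_add_cancel, rpow_one]
      _ ≤ _ := Gamma_mul_le_Gamma_add_mul_rpow ha₀ ha₁ hx
  · rw [div_le_one hden]
    exact Gamma_add_le_Gamma_mul_rpow ha₀ ha₁ hx

lemma tendsto_Gamma_add_div_Gamma_mul_rpow {a : ℝ} (ha : 0 ≤ a) :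
    Tendsto (fun x => Gamma (x + a) / (Gamma x * x ^ a)) atTop (𝓝 1) := by
  suffices h : ∀ n : ℕ, ∀ b : ℝ, 0 ≤ b → b < 1 →
      Tendsto (fun x => Gamma (x + (b + n)) / (Gamma x * x ^ (b + n))) atTop (𝓝 1) by
    simpa using h ⌊a⌋₊ (a - ⌊a⌋₊) (sub_nonneg.2 (Nat.floor_le ha))
      (by linarith [Nat.lt_floor_add_one a])
  intro n b hb₀ hb₁
  induction n with
  | zero => simpa using tendsto_Gamma_add_div_Gamma_mul_rpow_of_lt_one hb₀ hb₁
  | succ n ih =>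
    have h := ih.mul (tendsto_add_div_self_atTop (b + n))
    rw [one_mul] at h
    refine h.congr' ?_
    filter_upwards [eventually_gt_atTop 0] with x hx
    have hxb : 0 < x + (b + n) := by positivity
    rw [Nat.cast_succ, ← add_assoc b, ← add_assoc x (b + n) 1, Gamma_add_one hxb.ne',
      rpow_add_one hx.ne']
    have := Gamma_pos_of_pos hx
    field_simp

end Real

noncomputable def betaConst (n β : ℝ) : ℝ :=
  Gamma (n / 2 + β + 1) / (π ^ (n / 2) * Gamma (β + 1))

lemma betaConst_pos {n β : ℝ} (hn : 0 ≤ n) (hβ : -1 < β) : 0 < betaConst n β := by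
  unfold betaConst
  have := Gamma_pos_of_pos (by linarith : 0 < β + 1)
  have := Gamma_pos_of_pos (by linarith [div_nonneg hn zero_le_two] : 0 < n / 2 + β + 1)
  positivity

lemma tendsto_betaConst_div_rpow {n : ℝ} (hn : 0 ≤ n) :
    Tendsto (fun β => betaConst n β / (2 * β) ^ (n / 2)) atTop (𝓝 ((2 * π) ^ (-n / 2))) := by
  set a := n / 2
  have hratio := (tendsto_Gamma_add_div_Gamma_mul_rpow (by positivity : 0 ≤ a)).comp
    (tendsto_atTop_add_const_right atTop 1 tendsto_id)
  have hpow : Tendsto (fun β : ℝ => ((β + 1) / β / (2 * π)) ^ a) atTop (𝓝 ((1 / (2 * π)) ^ a)) :=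
    ((tendsto_add_div_self_atTop 1).div_const _).rpow_const
      (Or.inl (by positivity))
  have hlim : (1 / (2 * π)) ^ a = (2 * π) ^ (-n / 2) := by
    rw [one_div, inv_rpow (by positivity), ← rpow_neg (by positivity), neg_div]
  rw [← hlim, ← one_mul ((1 / (2 * π)) ^ a)]
  refine (hratio.mul hpow).congr' ?_
  filter_upwards [eventually_gt_atTop 0] with β hβ
  have := Gamma_pos_of_pos (by linarith : 0 < β + 1)
  have := rpow_pos_of_pos (by linarith : 0 < β + 1) a
  have := rpow_pos_of_pos (by linarith : 0 < 2 * β) a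
  have := rpow_pos_of_pos pi_pos a
  simp only [Function.comp_apply, id, betaConst]
  rw [show n / 2 + β + 1 = β + 1 + a by ring, div_div, div_rpow (by positivity) (by positivity),
    mul_rpow hβ.le (by positivity), mul_rpow two_pos.le pi_pos.le, mul_rpow two_pos.le hβ.le]
  field_simp
  ring

noncomputable def betaProfile (β u : ℝ) : ℝ := if u < β then (1 - u / β) ^ β else 0

lemma betaProfile_nonneg {β : ℝ} (hβ : 0 < β) (u : ℝ) : 0 ≤ betaProfile β u := by
  unfold betaProfile
  split_ifs with hu
  · exact rpow_nonneg (by rw [sub_nonneg, div_le_one hβ]; exact hu.le) β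
  · exact le_rfl

lemma betaProfile_le_exp_neg {β : ℝ} (hβ : 0 < β) (u : ℝ) : betaProfile β u ≤ exp (-u) := by
  unfold betaProfile
  split_ifs with hu
  · calc (1 - u / β) ^ β ≤ exp (-(u / β)) ^ β :=
          rpow_le_rpow (by rw [sub_nonneg, div_le_one hβ]; exact hu.le)
            (one_sub_le_exp_neg _) hβ.le
      _ = exp (-u) := by rw [← exp_mul]; field_simp
  · exact (exp_pos _).le

lemma tendsto_betaProfile (u : ℝ) : Tendsto (betaProfile · u) atTop (𝓝 (exp (-u))) := by
  refine (tendsto_one_add_div_rpow_exp (-u)).congr' ?_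
  filter_upwards [eventually_gt_atTop u] with β hu
  rw [betaProfile, if_pos hu, neg_div, ← sub_eq_add_neg]

lemma measurable_betaProfile (β : ℝ) : Measurable (betaProfile β) :=
  Measurable.ite measurableSet_Iio (by fun_prop) measurable_const

section Integrals

variable {α : Type*} [MeasurableSpace α]

lemma integral_withDensity_ofReal {μ : Measure α} {f : α → ℝ} (hf : Measurable f)
    (hf₀ : ∀ x, 0 ≤ f x) (g : α → ℝ) :
    ∫ x, g x ∂μ.withDensity (fun x => ENNReal.ofReal (f x)) = ∫ x, f x * g x ∂μ := by
  rw [integral_withDensity_eq_integral_toReal_smul (by fun_prop)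
    (ae_of_all _ fun _ => ENNReal.ofReal_lt_top)]
  simp only [ENNReal.toReal_ofReal (hf₀ _), smul_eq_mul]

lemma integral_map_smul_withDensity_ofReal {E : Type*} [NormedAddCommGroup E] [NormedSpace ℝ E]
    [MeasurableSpace E] [BorelSpace E] [FiniteDimensional ℝ E] (μ : Measure E)
    [μ.IsAddHaarMeasure] {f g : E → ℝ} (hf : Measurable f) (hf₀ : ∀ x, 0 ≤ f x)
    (hg : Measurable g) {R : ℝ} (hR : 0 < R) :
    ∫ x, g x ∂(μ.withDensity (fun x => ENNReal.ofReal (f x))).map (R • ·) =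
      ∫ y, (R ^ Module.finrank ℝ E)⁻¹ * f (R⁻¹ • y) * g y ∂μ := by
  rw [integral_map (measurable_const_smul R).aemeasurable hg.aestronglyMeasurable,
    integral_withDensity_ofReal hf hf₀]
  have h := Measure.integral_comp_smul_of_nonneg μ (fun y => f (R⁻¹ • y) * g y) R (hR := hR.le)
  simp only [inv_smul_smul₀ hR.ne', smul_eq_mul] at h
  rw [h, ← integral_const_mul]
  simp only [mul_assoc]

lemma tendsto_integral_mul_of_dominated {ι : Type*} {l : Filter ι} [l.IsCountablyGenerated]
    {μ : Measure α} {ρ : ι → α → ℝ} {ρ₀ H g : α → ℝ} {C : ℝ}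
    (hρ_meas : ∀ᶠ i in l, AEStronglyMeasurable (ρ i) μ)
    (hρ_bound : ∀ᶠ i in l, ∀ᵐ x ∂μ, |ρ i x| ≤ H x)
    (hH : Integrable H μ) (hρ_lim : ∀ᵐ x ∂μ, Tendsto (ρ · x) l (𝓝 (ρ₀ x)))
    (hg_meas : AEStronglyMeasurable g μ) (hg : ∀ x, |g x| ≤ C) :
    Tendsto (fun i => ∫ x, ρ i x * g x ∂μ) l (𝓝 (∫ x, ρ₀ x * g x ∂μ)) := by
  refine tendsto_integral_filter_of_dominated_convergence (fun x => H x * C)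
    (hρ_meas.mono fun i hi => hi.mul hg_meas) ?_ (hH.mul_const C)
    (hρ_lim.mono fun x hx => hx.mul_const (g x))
  filter_upwards [hρ_bound] with i hi
  filter_upwards [hi] with x hx
  rw [norm_mul, Real.norm_eq_abs, Real.norm_eq_abs]
  exact mul_le_mul hx (hg x) (abs_nonneg _) ((abs_nonneg _).trans hx)

end Integrals

lemma integrable_exp_neg_mul_sq_norm {V : Type*} [NormedAddCommGroup V] [InnerProductSpace ℝ V]
    [FiniteDimensional ℝ V] [MeasurableSpace V] [BorelSpace V] {b : ℝ} (hb : 0 < b) :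
    Integrable (fun v : V => exp (-b * ‖v‖ ^ 2)) := by
  refine Integrable.of_integral_ne_zero ?_
  rw [GaussianFourier.integral_rexp_neg_mul_sq_norm hb]
  exact (rpow_pos_of_pos (by positivity) _).ne'

noncomputable def betaDensity (d : ℕ) (β : ℝ) (x : EuclideanSpace ℝ (Fin d)) : ℝ :=
  if ‖x‖ < 1 then betaConst d β * (1 - ‖x‖ ^ 2) ^ β else 0

lemma betaDensity_nonneg (d : ℕ) {β : ℝ} (hβ : -1 < β) (x : EuclideanSpace ℝ (Fin d)) :
    0 ≤ betaDensity d β x := by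
  unfold betaDensity
  split_ifs with hx
  · have : ‖x‖ ^ 2 < 1 := pow_lt_one₀ (norm_nonneg x) hx two_ne_zero
    exact mul_nonneg (betaConst_pos d.cast_nonneg hβ).le (rpow_nonneg (by linarith) β)
  · exact le_rfl

lemma measurable_betaDensity (d : ℕ) (β : ℝ) : Measurable (betaDensity d β) :=
  Measurable.ite (measurableSet_lt measurable_norm measurable_const) (by fun_prop)
    measurable_const

lemma betaDensity_inv_smul_sqrt (d : ℕ) {β : ℝ} (hβ : 0 < β) (y : EuclideanSpace ℝ (Fin d)) :
    (√(2 * β) ^ d)⁻¹ * betaDensity d β ((√(2 * β))⁻¹ • y) =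
      betaConst d β / (2 * β) ^ ((d : ℝ) / 2) * betaProfile β (‖y‖ ^ 2 / 2) := by
  have h2β : 0 < 2 * β := by positivity
  have hnorm : ‖(√(2 * β))⁻¹ • y‖ ^ 2 = ‖y‖ ^ 2 / 2 / β := by
    rw [norm_smul, mul_pow, norm_inv, norm_of_nonneg (sqrt_nonneg _), inv_pow,
      sq_sqrt h2β.le, div_div, inv_mul_eq_div]
  have hlt : ‖(√(2 * β))⁻¹ • y‖ < 1 ↔ ‖y‖ ^ 2 / 2 < β := by
    rw [← sq_lt_one_iff₀ (norm_nonneg _), hnorm, div_lt_one hβ]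
  have hpow : √(2 * β) ^ d = (2 * β) ^ ((d : ℝ) / 2) := by
    rw [sqrt_eq_rpow, ← rpow_natCast, ← rpow_mul h2β.le, one_div_mul_eq_div]
  rw [betaDensity, betaProfile, hpow]
  by_cases hy : ‖y‖ ^ 2 / 2 < β
  · rw [if_pos (hlt.2 hy), if_pos hy, hnorm]
    ring
  · rw [if_neg (mt hlt.1 hy), if_neg hy]
    simp

theorem beta_rescaled_tendsto_gaussian_general (d : ℕ)
    (μ : ℝ → Measure (EuclideanSpace ℝ (Fin d)))
    (hμ : ∀ β : ℝ, -1 < β → μ β = volume.withDensity (fun x =>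
      ENNReal.ofReal (if ‖x‖ < 1 then
        (Real.Gamma ((d : ℝ) / 2 + β + 1) / (Real.pi ^ ((d : ℝ) / 2) * Real.Gamma (β + 1))) *
          (1 - ‖x‖ ^ 2) ^ β
      else 0)))
    (γ : Measure (EuclideanSpace ℝ (Fin d)))
    (hγ : γ = volume.withDensity (fun x =>
      ENNReal.ofReal ((2 * Real.pi) ^ (-(d : ℝ) / 2) * Real.exp (-‖x‖ ^ 2 / 2)))) :
    ∀ g : BoundedContinuousFunction (EuclideanSpace ℝ (Fin d)) ℝ,
      Tendsto (fun β : ℝ => ∫ x, g x ∂((μ β).map (fun x => Real.sqrt (2 * β) • x)))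
        atTop (nhds (∫ x, g x ∂γ)) := by
  intro g
  set L := (2 * π) ^ (-(d : ℝ) / 2)
  set κ := fun β : ℝ => betaConst d β / (2 * β) ^ ((d : ℝ) / 2)
  have hκ : Tendsto κ atTop (𝓝 L) := tendsto_betaConst_div_rpow d.cast_nonneg
  have hleft : ∀ᶠ β in atTop, ∫ x, g x ∂((μ β).map (√(2 * β) • ·)) =
      ∫ y, κ β * betaProfile β (‖y‖ ^ 2 / 2) * g y := by
    filter_upwards [eventually_gt_atTop 0] with β hβ
    have hμβ : μ β = volume.withDensity (fun x => ENNReal.ofReal (betaDensity d β x)) :=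
      hμ β (by linarith)
    rw [hμβ, integral_map_smul_withDensity_ofReal volume (measurable_betaDensity d β)
      (betaDensity_nonneg d (by linarith)) g.continuous.measurable (by positivity)]
    simp only [finrank_euclideanSpace_fin, betaDensity_inv_smul_sqrt d hβ, κ]
  have hright : ∫ x, g x ∂γ = ∫ y, L * exp (-(‖y‖ ^ 2 / 2)) * g y := by
    rw [hγ, integral_withDensity_ofReal (by fun_prop) (fun _ => by positivity)]
    simp only [neg_div, L]
  rw [hright]
  refine (tendsto_integral_mul_of_dominated (H := fun y => (L + 1) * exp (-(‖y‖ ^ 2 / 2)))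
    (Eventually.of_forall fun β => ?_) ?_ ?_ (ae_of_all _ fun y => hκ.mul (tendsto_betaProfile _))
    g.continuous.aestronglyMeasurable (fun x => by simpa using g.norm_coe_le_norm x)).congr'
    (hleft.mono fun _ h => h.symm)
  · exact (((measurable_betaProfile β).comp (by fun_prop)).const_mul _).aestronglyMeasurable
  · filter_upwards [eventually_gt_atTop 0, hκ.eventually (eventually_le_nhds (lt_add_one L))]
      with β hβ hκβ
    refine ae_of_all _ fun y => ?_
    have hκ₀ : 0 ≤ κ β :=
      div_nonneg (betaConst_pos d.cast_nonneg (by linarith)).le (by positivity)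
    rw [abs_of_nonneg (mul_nonneg hκ₀ (betaProfile_nonneg hβ _))]
    exact mul_le_mul hκβ (betaProfile_le_exp_neg hβ _) (betaProfile_nonneg hβ _)
      (hκ₀.trans hκβ)
  · simpa [neg_div, div_eq_inv_mul] using
      (integrable_exp_neg_mul_sq_norm (V := EuclideanSpace ℝ (Fin d)) (b := 1 / 2)
        (by norm_num)).const_mul (L + 1)

/-- If `X(β)` has the beta density `f_{d,β}`, then `√(2β) X(β)` converges in distribution
(i.e. weakly, tested against bounded continuous functions) to the standard normal
distribution on `ℝ^d`, as `β → +∞`. -/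
theorem beta_rescaled_tendsto_gaussian (d : ℕ) (hd : 1 ≤ d)
    (μ : ℝ → Measure (EuclideanSpace ℝ (Fin d)))
    (hμ : ∀ β : ℝ, -1 < β → μ β = volume.withDensity (fun x =>
      ENNReal.ofReal (if ‖x‖ < 1 then
        (Real.Gamma ((d : ℝ) / 2 + β + 1) / (Real.pi ^ ((d : ℝ) / 2) * Real.Gamma (β + 1))) *
          (1 - ‖x‖ ^ 2) ^ β
      else 0)))
    (γ : Measure (EuclideanSpace ℝ (Fin d)))
    (hγ : γ = volume.withDensity (fun x =>
      ENNReal.ofReal ((2 * Real.pi) ^ (-(d : ℝ) / 2) * Real.exp (-‖x‖ ^ 2 / 2)))) :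
    ∀ g : BoundedContinuousFunction (EuclideanSpace ℝ (Fin d)) ℝ,
      Tendsto (fun β : ℝ => ∫ x, g x ∂((μ β).map (fun x => Real.sqrt (2 * β) • x)))
        atTop (nhds (∫ x, g x ∂γ)) :=
  beta_rescaled_tendsto_gaussian_general d μ hμ γ hγ
end

section
/- For all integers m with 2 ≤ m ≤ n-1, binom(n,m)·I_{n,m}(1) = (c_{1,(m-1)/2}·2^m/(m!·(n-m)!))·Γ(n-(m-1)/2)·Γ((m+1)/2), where I_{n,m}(1) = ∫_{-1}^{1} c_{1,(m-1)/2}(1-t²)^{(m-1)/2} ((1+t)/2)^{n-m} dt. Consequently, (binom(n+1,m)·I_{n+1,m}(1))/(binom(n,m)·I_{n,m}(1)) = (n-(m-1)/2)/(n-m+1) > 1. -/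
open MeasureTheory Real intervalIntegral

lemma beta_real (a b : ℝ) (ha : 0 < a) (hb : 0 < b) :
    ∫ x in (0:ℝ)..1, x ^ (a - 1) * (1 - x) ^ (b - 1) =
      Real.Gamma a * Real.Gamma b / Real.Gamma (a + b) := by
  have h := Complex.Gamma_mul_Gamma_eq_betaIntegral (s := (a:ℂ)) (t := (b:ℂ))
    (by simpa using ha) (by simpa using hb)
  have hB : Complex.betaIntegral a b =
      ((∫ x in (0:ℝ)..1, x ^ (a - 1) * (1 - x) ^ (b - 1) : ℝ) : ℂ) := by
    rw [Complex.betaIntegral, ← intervalIntegral.integral_ofReal]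
    apply intervalIntegral.integral_congr
    intro x hx
    rw [Set.uIcc_of_le (by norm_num : (0:ℝ) ≤ 1)] at hx
    push_cast
    rw [Complex.ofReal_cpow hx.1, Complex.ofReal_cpow (by linarith [hx.2])]
    push_cast
    ring
  rw [hB, ← Complex.ofReal_add, Complex.Gamma_ofReal, Complex.Gamma_ofReal,
    Complex.Gamma_ofReal, ← Complex.ofReal_mul, ← Complex.ofReal_mul] at h
  have := Complex.ofReal_injective h
  have hG : Real.Gamma (a + b) ≠ 0 := (Real.Gamma_pos_of_pos (by linarith)).ne'
  field_simp
  linarith [this]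

lemma I_val (a : ℝ) (ha : 0 < a) (k : ℕ) :
    ∫ t in (-1:ℝ)..1, (1 - t ^ 2) ^ a * ((1 + t) / 2) ^ k =
      2 * 4 ^ a * ∫ x in (0:ℝ)..1, x ^ (a + k) * (1 - x) ^ a := by
  have h1 := intervalIntegral.integral_comp_mul_add (a := (0:ℝ)) (b := 1)
    (fun t => (1 - t ^ 2) ^ a * ((1 + t) / 2) ^ k) two_ne_zero (-1)
  norm_num at h1
  have h2 : ∫ x in (0:ℝ)..1, (1 - (2 * x + -1) ^ 2) ^ a * x ^ k =
      4 ^ a * ∫ x in (0:ℝ)..1, x ^ (a + k) * (1 - x) ^ a := by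
    rw [← intervalIntegral.integral_const_mul]
    apply intervalIntegral.integral_congr
    intro x hx
    rw [Set.uIcc_of_le (by norm_num : (0:ℝ) ≤ 1)] at hx
    have hx0 : (0:ℝ) ≤ x := hx.1
    have hx1 : (0:ℝ) ≤ 1 - x := by linarith [hx.2]
    have e1 : 1 - (2 * x + -1) ^ 2 = 4 * (x * (1 - x)) := by ring
    simp only [e1]
    rw [Real.mul_rpow (by norm_num) (mul_nonneg hx0 hx1), Real.mul_rpow hx0 hx1,
      ← Real.rpow_natCast x k]
    rw [show a + (k:ℝ) = (k:ℝ) + a by ring, Real.rpow_add' hx0 (by positivity)]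
    ring
  rw [h2] at h1
  linarith [h1]

/-- For `2 ≤ m ≤ n-1`:
`C(n,m)·I_{n,m}(1) = c_{1,(m-1)/2} 2^m/(m!(n-m)!) · Γ(n-(m-1)/2) Γ((m+1)/2)`, where
`I_{n,m}(1) = ∫_{-1}^1 c_{1,(m-1)/2}(1-t²)^{(m-1)/2} ((1+t)/2)^{n-m} dt`, and consequently
the ratio `(C(n+1,m)·I_{n+1,m}(1))/(C(n,m)·I_{n,m}(1)) = (n-(m-1)/2)/(n-m+1) > 1`. -/
theorem choose_mul_I_one (n m : ℕ) (hm : 2 ≤ m) (hmn : m + 1 ≤ n)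
    (c : ℝ) (hc : c = Real.Gamma (((m : ℝ) - 1) / 2 + 3 / 2) /
      (Real.sqrt Real.pi * Real.Gamma (((m : ℝ) - 1) / 2 + 1)))
    (I : ℕ → ℝ)
    (hI : ∀ N : ℕ, I N = ∫ t in (-1 : ℝ)..1,
      c * (1 - t ^ 2) ^ (((m : ℝ) - 1) / 2) * ((1 + t) / 2) ^ (N - m)) :
    (n.choose m : ℝ) * I n =
        c * 2 ^ m / ((m.factorial : ℝ) * ((n - m).factorial : ℝ)) *
          (Real.Gamma ((n : ℝ) - ((m : ℝ) - 1) / 2) * Real.Gamma (((m : ℝ) + 1) / 2)) ∧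
      ((n + 1).choose m : ℝ) * I (n + 1) / ((n.choose m : ℝ) * I n) =
        ((n : ℝ) - ((m : ℝ) - 1) / 2) / ((n : ℝ) - m + 1) ∧
      (1 : ℝ) < ((n : ℝ) - ((m : ℝ) - 1) / 2) / ((n : ℝ) - m + 1) := by
  set a : ℝ := ((m : ℝ) - 1) / 2 with ha_def
  have hm1 : (2:ℝ) ≤ (m:ℝ) := by exact_mod_cast hm
  have ha : 0 < a := by rw [ha_def]; linarith
  have h2m : 2 * (4:ℝ) ^ a = 2 ^ m := by
    have h4 : (4:ℝ) ^ a = 2 ^ a * 2 ^ a := by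
      rw [show (4:ℝ) = 2 * 2 by norm_num, Real.mul_rpow (by norm_num) (by norm_num)]
    rw [h4, ← Real.rpow_natCast 2 m, ← Real.rpow_add two_pos]
    nth_rewrite 1 [← Real.rpow_one 2]
    rw [← Real.rpow_add two_pos]
    congr 1
    rw [ha_def]; ring
  -- the key formula for I N
  have key : ∀ N : ℕ, m ≤ N → I N = c * 2 ^ m *
      (Real.Gamma ((N : ℝ) - a) * Real.Gamma (a + 1)) / Real.Gamma ((N : ℝ) + 1) := by
    intro N hN
    rw [hI N]
    simp_rw [mul_assoc, intervalIntegral.integral_const_mul]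
    rw [I_val a ha (N - m)]
    have hcast : ((N - m : ℕ) : ℝ) = (N : ℝ) - m := by
      rw [Nat.cast_sub hN]
    have hbeta := beta_real (a + (N - m : ℕ) + 1) (a + 1) (by positivity) (by positivity)
    rw [show (a + ((N - m : ℕ):ℝ) + 1 - 1 : ℝ) = a + ((N - m : ℕ):ℝ) by ring,
      show (a + 1 - 1 : ℝ) = a by ring] at hbeta
    rw [hbeta, h2m]
    rw [show a + ((N - m : ℕ):ℝ) + 1 = (N:ℝ) - a by
        rw [hcast, ha_def]; ring,
      show (N:ℝ) - a + (a + 1) = (N:ℝ) + 1 by ring]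
    ring
  have hna : 0 < (n:ℝ) - a := by
    rw [ha_def]
    have : (m:ℝ) + 1 ≤ (n:ℝ) := by exact_mod_cast hmn
    linarith
  have hΓn : 0 < Real.Gamma ((n:ℝ) - a) := Real.Gamma_pos_of_pos hna
  have hΓ2 : 0 < Real.Gamma (a + 1) := Real.Gamma_pos_of_pos (by linarith)
  have hc0 : 0 < c := by
    rw [hc]
    apply div_pos (Real.Gamma_pos_of_pos (by linarith))
    exact mul_pos (Real.sqrt_pos.mpr Real.pi_pos) (Real.Gamma_pos_of_pos (by linarith))
  have ha2 : a + 1 = ((m:ℝ) + 1) / 2 := by rw [ha_def]; ring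
  have hmn' : m ≤ n := by omega
  -- part 1
  have part1 : (n.choose m : ℝ) * I n =
      c * 2 ^ m / ((m.factorial : ℝ) * ((n - m).factorial : ℝ)) *
        (Real.Gamma ((n : ℝ) - a) * Real.Gamma (a + 1)) := by
    rw [key n hmn', Nat.cast_choose ℝ hmn',
      show ((n:ℝ) + 1) = ((n:ℕ):ℝ) + 1 by norm_num, Real.Gamma_nat_eq_factorial]
    have h1 : (n.factorial : ℝ) ≠ 0 := by positivity
    have h2 : (m.factorial : ℝ) ≠ 0 := by positivity
    have h3 : ((n - m).factorial : ℝ) ≠ 0 := by positivity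
    field_simp
  -- part 1 for n+1
  have hmn'' : m ≤ n + 1 := by omega
  have part1' : ((n + 1).choose m : ℝ) * I (n + 1) =
      c * 2 ^ m / ((m.factorial : ℝ) * (((n + 1 - m).factorial : ℝ))) *
        (Real.Gamma (((n:ℝ) + 1) - a) * Real.Gamma (a + 1)) := by
    rw [key (n + 1) hmn'', Nat.cast_choose ℝ hmn'',
      show (((n + 1 : ℕ):ℝ) + 1) = (((n + 1):ℕ):ℝ) + 1 by norm_num,
      Real.Gamma_nat_eq_factorial]
    have h1 : ((n + 1).factorial : ℝ) ≠ 0 := by positivity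
    have h2 : (m.factorial : ℝ) ≠ 0 := by positivity
    have h3 : ((n + 1 - m).factorial : ℝ) ≠ 0 := by positivity
    push_cast
    field_simp
  refine ⟨by rw [part1, ha2], ?_, ?_⟩
  · -- the ratio
    have hfac : ((n + 1 - m).factorial : ℝ) = ((n:ℝ) - m + 1) * ((n - m).factorial : ℝ) := by
      rw [show n + 1 - m = (n - m) + 1 by omega, Nat.factorial_succ]
      push_cast [Nat.cast_sub hmn']
      ring
    have hΓsucc : Real.Gamma (((n:ℝ) + 1) - a) = ((n:ℝ) - a) * Real.Gamma ((n:ℝ) - a) := by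
      rw [show ((n:ℝ) + 1) - a = ((n:ℝ) - a) + 1 by ring, Real.Gamma_add_one hna.ne']
    have hB : (0:ℝ) < (n:ℝ) - m + 1 := by
      have : (m:ℝ) + 1 ≤ (n:ℝ) := by exact_mod_cast hmn
      linarith
    have hden : (n.choose m : ℝ) * I n ≠ 0 := by
      rw [part1]; positivity
    rw [part1', part1, hfac, hΓsucc]
    have h2 : (m.factorial : ℝ) ≠ 0 := by positivity
    have h3 : ((n - m).factorial : ℝ) ≠ 0 := by positivity
    rw [div_eq_div_iff (by rw [← part1]; exact hden) hB.ne']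
    field_simp
  · rw [one_lt_div]
    · rw [ha_def]
      have : (m:ℝ) + 1 ≤ (n:ℝ) := by exact_mod_cast hmn
      linarith
    · have : (m:ℝ) + 1 ≤ (n:ℝ) := by exact_mod_cast hmn
      linarith
end

section
/- Let h, g, L : (0,1) → ℝ satisfy: (1) h is non-negative and measurable with 0 < ∫₀¹ h(s)ds < ∞; (2) g is linear with negative slope and a root at s* ∈ (0,1); (3) L is non-negative and strictly concave on (0,1). Then for all real m > 1, ∫₀¹ h(s)g(s)L(s)^{m-1} ds > ∫₀¹ h(s)g(s)((L(s*)/s*)·s)^{m-1} ds. -/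
open MeasureTheory Real

set_option maxHeartbeats 1000000 in
/-- Lemma 5 of Bonnet et al. (corrected version): if `h ≥ 0` is measurable with
`0 < ∫₀¹ h < ∞`, `g` is linear with negative slope and root `s* ∈ (0,1)`, and `L ≥ 0` is
strictly concave on `(0,1)`, then for all `m > 1`,
`∫₀¹ h g L^{m-1} > ∫₀¹ h g ((L(s*)/s*)·s)^{m-1}`. -/
theorem integral_concave_comparison
    (h g L : ℝ → ℝ) (a b sStar m : ℝ)
    (hh_nonneg : ∀ s ∈ Set.Ioo (0 : ℝ) 1, 0 ≤ h s)
    (hh_meas : Measurable h)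
    (hh_int : IntegrableOn h (Set.Ioo (0 : ℝ) 1))
    (hh_pos : 0 < ∫ s in Set.Ioo (0 : ℝ) 1, h s)
    (hg : ∀ s, g s = a * s + b) (ha : a < 0)
    (hsStar : sStar ∈ Set.Ioo (0 : ℝ) 1) (hroot : g sStar = 0)
    (hL_nonneg : ∀ s ∈ Set.Ioo (0 : ℝ) 1, 0 ≤ L s)
    (hL_concave : StrictConcaveOn ℝ (Set.Ioo (0 : ℝ) 1) L)
    (hm : 1 < m) :
    (∫ s in Set.Ioo (0 : ℝ) 1, h s * g s * ((L sStar / sStar) * s) ^ (m - 1)) <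
      ∫ s in Set.Ioo (0 : ℝ) 1, h s * g s * L s ^ (m - 1) := by
  obtain ⟨hs0, hs1⟩ := hsStar
  set I := Set.Ioo (0 : ℝ) 1 with hI_def
  set c := L sStar / sStar with hc_def
  set e := m - 1 with he_def
  have he : 0 < e := by simp only [he_def]; linarith
  -- g s = a * (s - sStar)
  have hb : b = -(a * sStar) := by
    have := hroot; rw [hg] at this; linarith
  have hgs : ∀ s, g s = a * (s - sStar) := by
    intro s; rw [hg s, hb]; ring
  have hgmeas : Measurable g := by
    have : g = fun s => a * s + b := funext hg
    rw [this]; exact (measurable_const.mul measurable_id).add measurable_const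
  -- Lemma A : chord-through-origin comparison (non-strict, via a limit)
  have lemA : ∀ s t : ℝ, 0 < s → s < t → t < 1 → s * L t ≤ t * L s := by
    intro s t hs hst ht1
    have key : ∀ ε ∈ Set.Ioo (0:ℝ) s, (L t - L s) * (s - ε) ≤ L s * (t - s) := by
      intro ε hε
      have hslope := hL_concave.concaveOn.slope_anti_adjacent (x := ε) (y := s) (z := t)
        ⟨hε.1, by linarith [hε.2]⟩ ⟨by linarith, ht1⟩ hε.2 hst
      rw [div_le_div_iff₀ (by linarith) (by linarith [hε.2])] at hslope
      have hLε : 0 ≤ L ε := hL_nonneg ε ⟨hε.1, by linarith [hε.2]⟩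
      nlinarith [hε.1, hε.2]
    have htend : Filter.Tendsto (fun ε : ℝ => (L t - L s) * (s - ε)) (nhdsWithin 0 (Set.Ioi 0))
        (nhds ((L t - L s) * (s - 0))) :=
      ((continuous_const.mul (continuous_const.sub continuous_id)).tendsto 0).mono_left
        nhdsWithin_le_nhds
    have hfin : (L t - L s) * (s - 0) ≤ L s * (t - s) := by
      refine le_of_tendsto htend ?_
      filter_upwards [Ioo_mem_nhdsGT_of_mem (Set.left_mem_Ico.2 hs)] with ε hε
      exact key ε hε
    nlinarith [hfin]
  -- L sStar > 0
  have hLsPos : 0 < L sStar := by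
    have hsl := hL_concave.slope_anti_adjacent (x := sStar/2) (y := sStar) (z := (1+sStar)/2)
      ⟨by linarith, by linarith⟩ ⟨by linarith, by linarith⟩ (by linarith) (by linarith)
    rw [div_lt_div_iff₀ (by linarith) (by linarith)] at hsl
    have h1 : 0 ≤ L (sStar/2) := hL_nonneg _ ⟨by linarith, by linarith⟩
    have h2 : 0 ≤ L ((1+sStar)/2) := hL_nonneg _ ⟨by linarith, by linarith⟩
    nlinarith
  have hc : 0 < c := div_pos hLsPos hs0
  -- Lemma B : strictly above the chord to the left of sStar
  have lemB : ∀ s : ℝ, 0 < s → s < sStar → s * L sStar < sStar * L s := by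
    intro s hs hss
    have hsl := hL_concave.slope_anti_adjacent (x := s/2) (y := s) (z := sStar)
      ⟨by linarith, by linarith⟩ ⟨by linarith, hs1⟩ (by linarith) hss
    rw [div_lt_div_iff₀ (by linarith) (by linarith)] at hsl
    have hA := lemA (s/2) sStar (by linarith) (by linarith) hs1
    nlinarith [mul_lt_mul_of_pos_left hsl hs0,
      mul_le_mul_of_nonneg_right hA (by linarith : (0:ℝ) ≤ sStar - s)]
  -- Lemma C : strictly below the chord to the right of sStar
  have lemC : ∀ s : ℝ, sStar < s → s < 1 → sStar * L s < s * L sStar := by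
    intro s hss hs1'
    have hsl := hL_concave.slope_anti_adjacent (x := sStar) (y := (sStar+s)/2) (z := s)
      ⟨hs0, hs1⟩ ⟨by linarith, hs1'⟩ (by linarith) (by linarith)
    rw [div_lt_div_iff₀ (by linarith) (by linarith)] at hsl
    have hA := lemA sStar ((sStar+s)/2) hs0 (by linarith) (by linarith)
    nlinarith [mul_lt_mul_of_pos_left hsl hs0,
      mul_le_mul_of_nonneg_right hA (by linarith : (0:ℝ) ≤ s - sStar)]
  have clt : ∀ s ∈ I, s < sStar → c * s < L s := by
    intro s hsI hlt
    rw [hc_def, div_mul_eq_mul_div, div_lt_iff₀ hs0]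
    nlinarith [lemB s hsI.1 hlt]
  have cgt : ∀ s ∈ I, sStar < s → L s < c * s := by
    intro s hsI hgt
    rw [hc_def, div_mul_eq_mul_div, lt_div_iff₀ hs0]
    nlinarith [lemC s hgt hsI.2]
  -- global bound on L
  set C := L sStar * (1 + 2/(1-sStar) + 2/sStar) with hC_def
  have hne1 : (1 - sStar) ≠ 0 := by linarith
  have hne2 : sStar ≠ 0 := by linarith
  have hXpos : 0 < 2/(1-sStar) := div_pos two_pos (by linarith)
  have hYpos : 0 < 2/sStar := div_pos two_pos hs0
  have hCpos : 0 < C := by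
    rw [hC_def]; exact mul_pos hLsPos (by linarith)
  have hbound : ∀ s ∈ I, L s ≤ C := by
    intro s hsI
    have hX : (1 - sStar) * (2/(1-sStar)) = 2 := by field_simp
    have hY : sStar * (2/sStar) = 2 := by field_simp
    rw [hC_def]
    rcases lt_trichotomy s sStar with hlt | heq | hgt
    · have hsl := hL_concave.concaveOn.slope_anti_adjacent (x := s) (y := sStar) (z := (1+sStar)/2)
        hsI ⟨by linarith, by linarith⟩ hlt (by linarith)
      rw [div_le_div_iff₀ (by linarith) (by linarith)] at hsl
      have h2 : 0 ≤ L ((1+sStar)/2) := hL_nonneg _ ⟨by linarith, by linarith⟩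
      nlinarith [hsI.1, hsI.2, mul_pos hLsPos hXpos, mul_pos hLsPos hYpos]
    · subst heq; nlinarith [mul_pos hLsPos hXpos, mul_pos hLsPos hYpos]
    · have hsl := hL_concave.concaveOn.slope_anti_adjacent (x := sStar/2) (y := sStar) (z := s)
        ⟨by linarith, by linarith⟩ hsI (by linarith) hgt
      rw [div_le_div_iff₀ (by linarith) (by linarith)] at hsl
      have h2 : 0 ≤ L (sStar/2) := hL_nonneg _ ⟨by linarith, by linarith⟩
      nlinarith [hsI.1, hsI.2, mul_pos hLsPos hXpos, mul_pos hLsPos hYpos]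
  -- measurability of L on I
  have hLcont : ContinuousOn L I := by
    have := (hL_concave.concaveOn.neg).continuousOn isOpen_Ioo
    simpa using this.neg
  have hLae : AEMeasurable L (volume.restrict I) := hLcont.aemeasurable measurableSet_Ioo
  have hrpow_meas : Measurable fun x : ℝ => x ^ e :=
    (Real.continuous_rpow_const he.le).measurable
  -- integrability of both integrands
  have hgabs : ∀ s ∈ I, |g s| ≤ |a| + |b| := by
    intro s hsI
    rw [hg s]
    calc |a * s + b| ≤ |a * s| + |b| := abs_add_le _ _
      _ = |a| * |s| + |b| := by rw [abs_mul]
      _ ≤ |a| * 1 + |b| := by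
          have : |s| ≤ 1 := by rw [abs_of_nonneg hsI.1.le]; exact hsI.2.le
          nlinarith [abs_nonneg a]
      _ = |a| + |b| := by ring
  have hFmeas : AEStronglyMeasurable (fun s => h s * g s * L s ^ e) (volume.restrict I) :=
    ((hh_meas.aemeasurable.mul hgmeas.aemeasurable).mul
      (hrpow_meas.comp_aemeasurable hLae)).aestronglyMeasurable
  have hGmeas : AEStronglyMeasurable (fun s => h s * g s * (c * s) ^ e) (volume.restrict I) :=
    ((hh_meas.aemeasurable.mul hgmeas.aemeasurable).mul
      ((hrpow_meas.comp (measurable_id.const_mul c)).aemeasurable)).aestronglyMeasurable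
  have hFint : IntegrableOn (fun s => h s * g s * L s ^ e) I := by
    refine Integrable.mono' (hh_int.mul_const ((|a| + |b|) * C ^ e)) hFmeas ?_
    rw [ae_restrict_iff' measurableSet_Ioo]
    refine ae_of_all _ fun s hsI => ?_
    have h3 : 0 ≤ L s ^ e := Real.rpow_nonneg (hL_nonneg s hsI) e
    have h2 : L s ^ e ≤ C ^ e := Real.rpow_le_rpow (hL_nonneg s hsI) (hbound s hsI) he.le
    have hmul : |g s| * L s ^ e ≤ (|a| + |b|) * C ^ e :=
      mul_le_mul (hgabs s hsI) h2 h3 (by positivity)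
    calc ‖h s * g s * L s ^ e‖ = h s * (|g s| * L s ^ e) := by
          rw [Real.norm_eq_abs, abs_mul, abs_mul, abs_of_nonneg (hh_nonneg s hsI),
            abs_of_nonneg h3, mul_assoc]
      _ ≤ h s * ((|a| + |b|) * C ^ e) := mul_le_mul_of_nonneg_left hmul (hh_nonneg s hsI)
  have hGint : IntegrableOn (fun s => h s * g s * (c * s) ^ e) I := by
    refine Integrable.mono' (hh_int.mul_const ((|a| + |b|) * c ^ e)) hGmeas ?_
    rw [ae_restrict_iff' measurableSet_Ioo]
    refine ae_of_all _ fun s hsI => ?_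
    have hcs : 0 ≤ c * s := mul_nonneg hc.le hsI.1.le
    have h3 : 0 ≤ (c * s) ^ e := Real.rpow_nonneg hcs e
    have h2 : (c * s) ^ e ≤ c ^ e :=
      Real.rpow_le_rpow hcs (by nlinarith [hsI.2]) he.le
    have hmul : |g s| * (c * s) ^ e ≤ (|a| + |b|) * c ^ e :=
      mul_le_mul (hgabs s hsI) h2 h3 (by positivity)
    calc ‖h s * g s * (c * s) ^ e‖ = h s * (|g s| * (c * s) ^ e) := by
          rw [Real.norm_eq_abs, abs_mul, abs_mul, abs_of_nonneg (hh_nonneg s hsI),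
            abs_of_nonneg h3, mul_assoc]
      _ ≤ h s * ((|a| + |b|) * c ^ e) := mul_le_mul_of_nonneg_left hmul (hh_nonneg s hsI)
  -- pointwise sign of the difference
  have hsgn : ∀ s ∈ I, s ≠ sStar → 0 < g s * (L s ^ e - (c * s) ^ e) := by
    intro s hsI hne
    rcases hne.lt_or_gt with hlt | hgt
    · have hg1 : 0 < g s := by
        rw [hgs s]; exact mul_pos_of_neg_of_neg ha (by linarith)
      have hcs : 0 < c * s := mul_pos hc hsI.1
      have hlt2 : (c * s) ^ e < L s ^ e := Real.rpow_lt_rpow hcs.le (clt s hsI hlt) he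
      exact mul_pos hg1 (by linarith)
    · have hg1 : g s < 0 := by
        rw [hgs s]; exact mul_neg_of_neg_of_pos ha (by linarith)
      have hlt2 : L s ^ e < (c * s) ^ e := Real.rpow_lt_rpow (hL_nonneg s hsI) (cgt s hsI hgt) he
      exact mul_pos_of_neg_of_neg hg1 (by linarith)
  have hDnn : ∀ s ∈ I, 0 ≤ h s * g s * L s ^ e - h s * g s * (c * s) ^ e := by
    intro s hsI
    have heq : h s * g s * L s ^ e - h s * g s * (c * s) ^ e
        = h s * (g s * (L s ^ e - (c * s) ^ e)) := by ring
    rw [heq]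
    rcases eq_or_ne s sStar with rfl | hne
    · rw [hroot]; simp
    · exact mul_nonneg (hh_nonneg s hsI) (hsgn s hsI hne).le
  -- strict positivity of the integral of the difference
  have hh_ae : 0 ≤ᵐ[volume.restrict I] h :=
    (ae_restrict_iff' measurableSet_Ioo).2 (ae_of_all _ hh_nonneg)
  have hsupp_h : 0 < volume (Function.support h ∩ I) :=
    (setIntegral_pos_iff_support_of_nonneg_ae hh_ae hh_int).1 hh_pos
  have hD_ae : 0 ≤ᵐ[volume.restrict I]
      (fun s => h s * g s * L s ^ e - h s * g s * (c * s) ^ e) :=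
    (ae_restrict_iff' measurableSet_Ioo).2 (ae_of_all _ hDnn)
  have hDint : IntegrableOn (fun s => h s * g s * L s ^ e - h s * g s * (c * s) ^ e) I :=
    hFint.sub hGint
  have hsub : (Function.support h ∩ I) \ {sStar} ⊆
      Function.support (fun s => h s * g s * L s ^ e - h s * g s * (c * s) ^ e) ∩ I := by
    intro s hs
    obtain ⟨⟨hsh, hsI⟩, hne'⟩ := hs
    have hne : s ≠ sStar := by simpa using hne'
    refine ⟨?_, hsI⟩
    have hhp : 0 < h s := (hh_nonneg s hsI).lt_of_ne (Ne.symm hsh)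
    have heq : h s * g s * L s ^ e - h s * g s * (c * s) ^ e
        = h s * (g s * (L s ^ e - (c * s) ^ e)) := by ring
    have hpos : 0 < h s * g s * L s ^ e - h s * g s * (c * s) ^ e := by
      rw [heq]; exact mul_pos hhp (hsgn s hsI hne)
    exact ne_of_gt hpos
  have hpos : 0 < ∫ s in I, (h s * g s * L s ^ e - h s * g s * (c * s) ^ e) := by
    rw [setIntegral_pos_iff_support_of_nonneg_ae hD_ae hDint]
    calc (0 : ENNReal) < volume (Function.support h ∩ I) := hsupp_h
      _ = volume ((Function.support h ∩ I) \ {sStar}) :=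
          (measure_diff_null (measure_singleton _)).symm
      _ ≤ _ := measure_mono hsub
  rw [integral_sub hFint hGint] at hpos
  linarith
end

section
/- Fix d ∈ ℕ and n ∈ ℕ, and let φ : (B^d)^n → ℝ be a bounded measurable function, where B^d is the closed unit ball in ℝ^d. Then the function I(z) = ∫_{(B^d)^n} φ(x₁,…,xₙ)·∏_{i=1}^{n} f_{d,z}(x_i) dx₁…dxₙ, where f_{d,z}(x) = (Γ(d/2+z+1)/(π^{d/2}Γ(z+1)))·(1-‖x‖²)^z, is analytic (holomorphic) on the half-plane {z ∈ ℂ : Re z > -1}. -/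
/-!
Each factor `c(z) (1 - ‖xᵢ‖²)^z` is holomorphic in `z`, and for `z` near `z₀` its modulus is at
most `C (1 - ‖xᵢ‖²)^r` for a fixed `-1 < r < Re z₀`; in polar coordinates this majorant reduces to
`∫₀¹ ρ^(d-1) (1 - ρ²)^r dρ < ∞`. A parametric integral of holomorphic functions with a locally
uniform integrable majorant is holomorphic: Cauchy's estimate bounds the `z`-derivatives by the
majorant, so one may differentiate under the integral sign.
-/

open MeasureTheory Real Metric Set Filter Topology

theorem aestronglyMeasurable_deriv_of_ae_differentiableAt {𝕜 E α : Type*}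
    [NontriviallyNormedField 𝕜] [NormedAddCommGroup E] [NormedSpace 𝕜 E] [MeasurableSpace α]
    {μ : Measure α} {F : 𝕜 → α → E} {z₀ : 𝕜}
    (hF_meas : ∀ᶠ z in 𝓝 z₀, AEStronglyMeasurable (F z) μ)
    (hF_diff : ∀ᵐ x ∂μ, DifferentiableAt 𝕜 (F · x) z₀) :
    AEStronglyMeasurable (fun x => deriv (F · x) z₀) μ := by
  obtain ⟨u, hu⟩ := (𝓝[≠] (0 : 𝕜)).exists_seq_tendsto
  have hu' : Tendsto (fun k => z₀ + u k) atTop (𝓝 z₀) := by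
    simpa using tendsto_const_nhds.add (tendsto_nhdsWithin_iff.1 hu).1
  obtain ⟨N, hN⟩ := eventually_atTop.1 (hu'.eventually hF_meas)
  refine aestronglyMeasurable_of_tendsto_ae atTop
    (f := fun k x => (u (k + N))⁻¹ • (F (z₀ + u (k + N)) x - F z₀ x))
    (fun k => ((hN _ le_add_self).sub hF_meas.self_of_nhds).const_smul _) ?_
  filter_upwards [hF_diff] with x hx
  exact hx.hasDerivAt.tendsto_slope_zero.comp ((tendsto_add_atTop_iff_nat N).2 hu)

theorem differentiableOn_integral_of_locally_dominated {α E : Type*} [MeasurableSpace α]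
    [NormedAddCommGroup E] [NormedSpace ℂ E] [CompleteSpace E] {μ : Measure α}
    {F : ℂ → α → E} {U : Set ℂ} (hU : IsOpen U)
    (hF_meas : ∀ z ∈ U, AEStronglyMeasurable (F z) μ)
    (hF_diff : ∀ᵐ x ∂μ, DifferentiableOn ℂ (F · x) U)
    (hF_dom : ∀ z₀ ∈ U, ∃ V ∈ 𝓝 z₀, ∃ bound : α → ℝ, Integrable bound μ ∧
      ∀ᵐ x ∂μ, ∀ z ∈ V, ‖F z x‖ ≤ bound x) :
    DifferentiableOn ℂ (fun z => ∫ x, F z x ∂μ) U := by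
  refine fun z₀ hz₀ => DifferentiableAt.differentiableWithinAt ?_
  obtain ⟨V, hV, bound, hbound_int, hbound⟩ := hF_dom z₀ hz₀
  obtain ⟨ε, hε, hεVU⟩ :=
    nhds_basis_closedBall.mem_iff.1 (inter_mem hV (hU.mem_nhds hz₀))
  have hε2 : 0 < ε / 2 := half_pos hε
  have hball : ∀ z ∈ ball z₀ (ε / 2), closedBall z (ε / 2) ⊆ V ∩ U := fun z hz =>
    (closedBall_subset_closedBall' (by linarith [mem_ball.1 hz])).trans hεVU
  -- Cauchy's estimate turns the bound on `F` into a bound on its derivative.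
  have hderiv_le : ∀ᵐ x ∂μ, ∀ z ∈ ball z₀ (ε / 2), ‖deriv (F · x) z‖ ≤ bound x / (ε / 2) := by
    filter_upwards [hbound, hF_diff] with x hx hdx z hz
    exact Complex.norm_deriv_le_of_forall_mem_sphere_norm_le hε2
      (hdx.diffContOnCl_ball ((hball z hz).trans inter_subset_right))
      fun w hw => hx w (hball z hz (sphere_subset_closedBall hw)).1
  have hderiv : ∀ᵐ x ∂μ, ∀ z ∈ ball z₀ (ε / 2), HasDerivAt (F · x) (deriv (F · x) z) z := by
    filter_upwards [hF_diff] with x hdx z hz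
    exact (hdx.differentiableAt
      (hU.mem_nhds (hball z hz (mem_closedBall_self hε2.le)).2)).hasDerivAt
  have hF_meas_nhds : ∀ᶠ z in 𝓝 z₀, AEStronglyMeasurable (F z) μ :=
    eventually_of_mem (hU.mem_nhds hz₀) hF_meas
  have hF_int : Integrable (F z₀) μ := by
    refine hbound_int.mono' (hF_meas z₀ hz₀) ?_
    filter_upwards [hbound] with x hx
    exact hx z₀ (hεVU (mem_closedBall_self hε.le)).1
  have hF'_meas : AEStronglyMeasurable (fun x => deriv (F · x) z₀) μ :=
    aestronglyMeasurable_deriv_of_ae_differentiableAt hF_meas_nhds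
      (hderiv.mono fun x hx => (hx z₀ (mem_ball_self hε2)).differentiableAt)
  exact (hasDerivAt_integral_of_dominated_loc_of_deriv_le (ball_mem_nhds z₀ hε2) hF_meas_nhds
    hF_int hF'_meas hderiv_le (hbound_int.div_const _) hderiv).2.differentiableAt

theorem integrableOn_pow_mul_one_sub_sq_rpow {s : ℝ} (hs : -1 < s) (m : ℕ) :
    IntegrableOn (fun r : ℝ => r ^ m * (1 - r ^ 2) ^ s) (Ioo 0 1) := by
  set t := min s 0
  have hdom : IntegrableOn (fun r : ℝ => (1 - r) ^ t) (Ioo 0 1) := by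
    have h := ((intervalIntegral.intervalIntegrable_rpow' (a := 0) (b := 1)
      (lt_min hs neg_one_lt_zero)).comp_sub_left 1).symm
    rw [sub_zero, sub_self] at h
    exact (intervalIntegrable_iff_integrableOn_Ioo_of_le zero_le_one).1 h
  refine hdom.mono' (by fun_prop)
    ((ae_restrict_mem measurableSet_Ioo).mono fun r ⟨hr0, hr1⟩ => ?_)
  have hpos : 0 < 1 - r ^ 2 := by nlinarith
  rw [norm_of_nonneg (by positivity)]
  -- `t ≤ 0` and `0 < 1 - r ≤ 1 - r ^ 2 ≤ 1`
  calc r ^ m * (1 - r ^ 2) ^ s ≤ 1 * (1 - r ^ 2) ^ t :=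
        mul_le_mul (pow_le_one₀ hr0.le hr1.le)
          (rpow_le_rpow_of_exponent_ge hpos (by nlinarith) (min_le_left _ _)) (by positivity)
          zero_le_one
    _ ≤ (1 - r) ^ t := by
        rw [one_mul]
        exact rpow_le_rpow_of_nonpos (by linarith) (by nlinarith) (min_le_right _ _)

theorem integrableOn_one_sub_norm_sq_rpow {E : Type*} [NormedAddCommGroup E] [NormedSpace ℝ E]
    [FiniteDimensional ℝ E] [MeasurableSpace E] [BorelSpace E] (μ : Measure E)
    [μ.IsAddHaarMeasure] {s : ℝ} (hs : -1 < s) :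
    IntegrableOn (fun x : E => (1 - ‖x‖ ^ 2) ^ s) (ball 0 1) μ := by
  cases subsingleton_or_nontrivial E with
  | inl _ =>
    refine (integrableOn_const measure_ball_lt_top.ne (C := (1 : ℝ))).congr_fun
      (fun x _ => ?_) measurableSet_ball
    simp [Subsingleton.elim x 0]
  | inr _ =>
    rw [integrableOn_fun_norm_addHaar μ (f := fun r => (1 - r ^ 2) ^ s)]
    exact integrableOn_pow_mul_one_sub_sq_rpow hs _

theorem Complex.differentiableAt_Gamma_of_re_pos {s : ℂ} (hs : 0 < s.re) :
    DifferentiableAt ℂ Complex.Gamma s :=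
  Complex.differentiableAt_Gamma s fun m hm => by
    rw [hm, neg_re, natCast_re] at hs
    linarith [m.cast_nonneg (α := ℝ)]

theorem differentiableOn_Gamma_add_div_mul_Gamma {a b : ℂ} (ha : 0 ≤ a.re) (hb : b ≠ 0) :
    DifferentiableOn ℂ (fun z => Complex.Gamma (a + z + 1) / (b * Complex.Gamma (z + 1)))
      {z | -1 < z.re} := by
  intro z (hz : -1 < z.re)
  have hz1 : 0 < (z + 1).re := by simp only [Complex.add_re, Complex.one_re]; linarith
  have hza1 : 0 < (a + z + 1).re := by simp only [Complex.add_re, Complex.one_re]; linarith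
  refine DifferentiableAt.differentiableWithinAt (.div ?_ ?_ ?_)
  · exact (Complex.differentiableAt_Gamma_of_re_pos hza1).comp z (by fun_prop)
  · exact ((Complex.differentiableAt_Gamma_of_re_pos hz1).comp z (by fun_prop)).const_mul b
  · exact mul_ne_zero hb (Complex.Gamma_ne_zero_of_re_pos hz1)

section UnitBallDensity

variable {E : Type*} [NormedAddCommGroup E]

theorem differentiableOn_ite_norm_lt_one_mul_cpow {c : ℂ → ℂ} {U : Set ℂ}
    (hc : DifferentiableOn ℂ c U) (y : E) :
    DifferentiableOn ℂ
      (fun z => if ‖y‖ < 1 then c z * ((1 - ‖y‖ ^ 2 : ℝ) : ℂ) ^ z else 0) U := by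
  split_ifs with hy
  · have : ((1 - ‖y‖ ^ 2 : ℝ) : ℂ) ≠ 0 := by
      exact_mod_cast (sub_pos.2 (pow_lt_one₀ (norm_nonneg y) hy two_ne_zero)).ne'
    exact hc.mul (differentiableOn_id.const_cpow (.inl this))
  · exact differentiableOn_const 0

theorem norm_ite_norm_lt_one_mul_cpow_le {c z : ℂ} {C r : ℝ} (hc : ‖c‖ ≤ C) (hr : r ≤ z.re)
    (y : E) :
    ‖if ‖y‖ < 1 then c * ((1 - ‖y‖ ^ 2 : ℝ) : ℂ) ^ z else 0‖ ≤
      C * (ball 0 1).indicator (fun y => (1 - ‖y‖ ^ 2) ^ r) y := by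
  split_ifs with hy
  · have hpos : 0 < 1 - ‖y‖ ^ 2 := sub_pos.2 (pow_lt_one₀ (norm_nonneg y) hy two_ne_zero)
    rw [indicator_of_mem (mem_ball_zero_iff.2 hy), norm_mul,
      Complex.norm_cpow_eq_rpow_re_of_pos hpos]
    exact mul_le_mul hc (rpow_le_rpow_of_exponent_ge hpos (by nlinarith [norm_nonneg y]) hr)
      (by positivity) ((norm_nonneg c).trans hc)
  · rw [indicator_of_notMem (by simpa using hy), norm_zero, mul_zero]

theorem measurable_ite_norm_lt_one_mul_cpow [MeasurableSpace E] [OpensMeasurableSpace E]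
    (c z : ℂ) :
    Measurable (fun y : E => if ‖y‖ < 1 then c * ((1 - ‖y‖ ^ 2 : ℝ) : ℂ) ^ z else 0) :=
  Measurable.ite (measurableSet_lt measurable_norm measurable_const) (by fun_prop)
    measurable_const

end UnitBallDensity

/-- Analytic continuation lemma: for a bounded measurable `φ : (B^d)^n → ℝ`, the function
`I(z) = ∫_{(B^d)^n} φ(x₁,…,xₙ) ∏ᵢ f_{d,z}(xᵢ) dx` (with
`f_{d,z}(x) = (Γ(d/2+z+1)/(π^{d/2}Γ(z+1)))(1-‖x‖²)^z` for `‖x‖<1`, zero otherwise)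
is holomorphic on the half-plane `Re z > -1`. -/
theorem I_analytic (d n : ℕ)
    (φ : (Fin n → EuclideanSpace ℝ (Fin d)) → ℝ)
    (hφ_meas : Measurable φ) (hφ_bdd : ∃ M : ℝ, ∀ x, |φ x| ≤ M)
    (I : ℂ → ℂ)
    (hI : ∀ z : ℂ, I z = ∫ x in Set.univ.pi
        (fun _ : Fin n => Metric.closedBall (0 : EuclideanSpace ℝ (Fin d)) 1),
      (φ x : ℂ) * ∏ i : Fin n,
        (if ‖x i‖ < 1 then
          (Complex.Gamma ((d : ℂ) / 2 + z + 1) /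
              ((Real.pi : ℂ) ^ ((d : ℂ) / 2) * Complex.Gamma (z + 1))) *
            ((1 - ‖x i‖ ^ 2 : ℝ) : ℂ) ^ z
        else 0)) :
    DifferentiableOn ℂ I {z : ℂ | -1 < z.re} := by
  obtain ⟨M, hM⟩ := hφ_bdd
  have hU : IsOpen {z : ℂ | -1 < z.re} := isOpen_lt continuous_const Complex.continuous_re
  have hc := differentiableOn_Gamma_add_div_mul_Gamma (a := (d : ℂ) / 2) (by simp only [Complex.div_ofNat_re, Complex.natCast_re]; positivity)
    (b := (Real.pi : ℂ) ^ ((d : ℂ) / 2)) (by simp [Real.pi_ne_zero])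
  set c := fun z : ℂ => Complex.Gamma ((d : ℂ) / 2 + z + 1) /
    ((Real.pi : ℂ) ^ ((d : ℂ) / 2) * Complex.Gamma (z + 1))
  rw [show I = _ from funext hI]
  refine differentiableOn_integral_of_locally_dominated hU
    (fun z _ => ((Complex.measurable_ofReal.comp hφ_meas).mul (Finset.measurable_prod _
      fun i _ => (measurable_ite_norm_lt_one_mul_cpow (c z) z).comp
        (measurable_pi_apply i))).aestronglyMeasurable)
    (ae_of_all _ fun x => (differentiableOn_const _).mul
      (.fun_finsetProd fun i _ => differentiableOn_ite_norm_lt_one_mul_cpow hc (x i)))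
    fun z₀ (hz₀ : -1 < z₀.re) => ?_
  obtain ⟨r, hr, hrz₀⟩ := exists_between hz₀
  set C := ‖c z₀‖ + 1
  have hV : {z | ‖c z‖ ≤ C ∧ r ≤ z.re} ∈ 𝓝 z₀ :=
    ((hc.continuousOn.continuousAt (hU.mem_nhds hz₀)).norm.eventually
      (ge_mem_nhds (lt_add_one _))).and
      (Complex.continuous_re.continuousAt.eventually (le_mem_nhds hrz₀))
  set w := (ball (0 : EuclideanSpace ℝ (Fin d)) 1).indicator fun y => (1 - ‖y‖ ^ 2) ^ r
  have hw : Integrable w := (integrable_indicator_iff measurableSet_ball).2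
    (integrableOn_one_sub_norm_sq_rpow volume hr)
  refine ⟨_, hV, fun x => M * ∏ i, C * w (x i),
    ((Integrable.fintype_prod fun _ => hw.const_mul C).const_mul M).restrict,
    ae_of_all _ fun x z ⟨hcz, hrz⟩ => ?_⟩
  rw [norm_mul, norm_prod, Complex.norm_real]
  exact mul_le_mul (hM x) (Finset.prod_le_prod (fun _ _ => norm_nonneg _)
    fun i _ => norm_ite_norm_lt_one_mul_cpow_le hcz hrz (x i)) (by positivity)
    ((abs_nonneg _).trans (hM x))
end
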